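/- For all real a > 0 and t > 0, Σ_{n=1}^∞ 6 a n · χ₃(n) · e^{−2 n² a² / t} / sqrt(2 π t³) = Σ_{n=1}^∞ (3√3 · π n · χ₃(n) / (18 a²)) · e^{−π² n² t / (18 a²)}, where χ₃(n) = (2/√3)·sin(2πn/3) is the nontrivial Dirichlet character modulo 3. (This identity is an instance of the functional equation of theta series.) -/
import Mathlib


open Real

/-- The nontrivial Dirichlet character modulo 3, `χ₃(n) = (2/√3) sin(2πn/3)`. -/
noncomputable def chiThree (n : ℕ) : ℝ := 2 / Real.sqrt 3 * Real.sin (2 * π * n / 3)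

lemma chiThree_eq_of (k : ℕ) (m : ℤ) (r : ℝ) (h : (k : ℝ) = 3 * m + r) :
    chiThree k = 2 / Real.sqrt 3 * Real.sin (2 * π * r / 3) := by
  rw [chiThree, h, show 2 * π * (3 * (m : ℝ) + r) / 3 = 2 * π * r / 3 + m * (2 * π) by ring,
    Real.sin_add_int_mul_two_pi]

lemma sin_two_pi_third : Real.sin (2 * π * 1 / 3) = Real.sqrt 3 / 2 := by
  rw [show 2 * π * 1 / 3 = π - π / 3 by ring, Real.sin_pi_sub, Real.sin_pi_div_three]

lemma chiThree_one_mod (k : ℕ) (m : ℤ) (h : (k : ℝ) = 3 * m + 1) : chiThree k = 1 := by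
  have h3 : Real.sqrt 3 ≠ 0 := by positivity
  rw [chiThree_eq_of k m 1 h, sin_two_pi_third]
  field_simp

lemma chiThree_neg_one_mod (k : ℕ) (m : ℤ) (h : (k : ℝ) = 3 * m + (-1)) : chiThree k = -1 := by
  have h3 : Real.sqrt 3 ≠ 0 := by positivity
  rw [chiThree_eq_of k m (-1) h,
    show 2 * π * (-1) / 3 = -(2 * π * 1 / 3) by ring, Real.sin_neg, sin_two_pi_third]
  field_simp

lemma chiThree_zero_mod (k : ℕ) (m : ℤ) (h : (k : ℝ) = 3 * m + 0) : chiThree k = 0 := by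
  rw [chiThree_eq_of k m 0 h]
  simp

/-- The sine kernel at `a = 1/3` as a `χ₃`-sum. -/
lemma hasSum_sinKernel_third {t : ℝ} (ht : 0 < t) :
    HasSum (fun n : ℕ ↦ Real.sqrt 3 * ((n : ℝ) + 1) * chiThree (n + 1)
        * Real.exp (-π * ((n : ℝ) + 1) ^ 2 * t))
      (HurwitzZeta.sinKernel ((1 / 3 : ℝ) : UnitAddCircle) t) := by
  have h3 : Real.sqrt 3 ≠ 0 := by positivity
  have h := HurwitzZeta.hasSum_nat_sinKernel (1 / 3 : ℝ) ht
  have h' := (hasSum_nat_add_iff' (f := fun n : ℕ ↦ 2 * (n : ℝ)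
      * Real.sin (2 * π * (1 / 3) * n) * Real.exp (-π * (n : ℝ) ^ 2 * t)) 1).mpr h
  simp only [Finset.range_one, Finset.sum_singleton, Nat.cast_zero, mul_zero, zero_mul,
    sub_zero] at h'
  refine h'.congr_fun fun n ↦ ?_
  have harg : 2 * π * (1 / 3) * ((n : ℝ) + 1) = 2 * π * ((n : ℕ) + 1 : ℕ) / 3 := by
    push_cast; ring
  push_cast
  rw [harg, chiThree]
  push_cast
  field_simp

/-- The odd kernel at `a = 1/3` as a `χ₃`-sum. -/
lemma hasSum_oddKernel_third {x : ℝ} (hx : 0 < x) :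
    HasSum (fun k : ℕ ↦ (((k : ℝ) + 1) / 3) * chiThree (k + 1)
        * Real.exp (-π * ((k : ℝ) + 1) ^ 2 * (x / 9)))
      (HurwitzZeta.oddKernel ((1 / 3 : ℝ) : UnitAddCircle) x) := by
  set g : ℕ → ℝ := fun k ↦ (((k : ℝ) + 1) / 3) * chiThree (k + 1)
      * Real.exp (-π * ((k : ℝ) + 1) ^ 2 * (x / 9)) with hg
  set j : ℤ → ℕ := fun n ↦ (3 * n + 1).natAbs - 1 with hjdef
  have hj : Function.Injective j := by
    intro m n hmn
    simp only [hjdef] at hmn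
    omega
  have hvan : ∀ k, k ∉ Set.range j → g k = 0 := by
    intro k hk
    have h3 : 3 ∣ (k + 1) := by
      by_contra h
      rcases (by omega : (k + 1) % 3 = 1 ∨ (k + 1) % 3 = 2) with h1 | h1
      · exact hk ⟨(((k + 1) / 3 : ℕ) : ℤ),
          by show (3 * (((k + 1) / 3 : ℕ) : ℤ) + 1).natAbs - 1 = k; omega⟩
      · exact hk ⟨-((((k + 1) / 3 : ℕ) : ℤ)) - 1,
          by show (3 * (-((((k + 1) / 3 : ℕ) : ℤ)) - 1) + 1).natAbs - 1 = k; omega⟩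
    obtain ⟨m, hm⟩ := h3
    have : chiThree (k + 1) = 0 := by
      refine chiThree_zero_mod _ (m : ℤ) ?_
      push_cast [hm]; ring
    simp [hg, this]
  have hf := HurwitzZeta.hasSum_int_oddKernel (1 / 3 : ℝ) hx
  refine (hj.hasSum_iff hvan).mp (hf.congr_fun fun n ↦ ?_)
  show g (j n) = ((n : ℝ) + 1 / 3) * Real.exp (-π * ((n : ℝ) + 1 / 3) ^ 2 * x)
  have hpos : 1 ≤ (3 * n + 1).natAbs := by omega
  have hk1 : j n + 1 = (3 * n + 1).natAbs := by simp only [hjdef]; omega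
  rcases Int.natAbs_eq (3 * n + 1) with he | he
  · have hcast : ((j n : ℝ) + 1) = 3 * (n : ℝ) + 1 := by
      have h2 : ((j n + 1 : ℕ) : ℤ) = 3 * n + 1 := by rw [hk1]; omega
      have h3 : ((j n : ℤ) : ℝ) + 1 = 3 * ((n : ℤ) : ℝ) + 1 := by exact_mod_cast congrArg (fun z : ℤ ↦ (z : ℝ)) h2
      push_cast at h3 ⊢; linarith
    have hchi : chiThree (j n + 1) = 1 := chiThree_one_mod _ n (by push_cast; linarith [hcast])
    rw [hg]
    simp only
    rw [hcast, hchi,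
      show -π * (3 * (n : ℝ) + 1) ^ 2 * (x / 9) = -π * ((n : ℝ) + 1 / 3) ^ 2 * x by ring]
    ring
  · have hcast : ((j n : ℝ) + 1) = -(3 * (n : ℝ) + 1) := by
      have h2 : ((j n + 1 : ℕ) : ℤ) = -(3 * n + 1) := by rw [hk1]; omega
      have h3 : ((j n : ℤ) : ℝ) + 1 = -(3 * ((n : ℤ) : ℝ) + 1) := by exact_mod_cast congrArg (fun z : ℤ ↦ (z : ℝ)) h2
      push_cast at h3 ⊢; linarith
    have hchi : chiThree (j n + 1) = -1 := by
      refine chiThree_neg_one_mod _ (-n) ?_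
      push_cast; push_cast at hcast; linarith
    rw [hg]
    simp only
    rw [hcast, hchi,
      show -π * (-(3 * (n : ℝ) + 1)) ^ 2 * (x / 9) = -π * ((n : ℝ) + 1 / 3) ^ 2 * x by ring]
    ring

/-- A theta-series functional equation: for `a, t > 0`,
`Σ_{n≥1} 6 a n χ₃(n) e^{-2n²a²/t} / √(2πt³)
  = Σ_{n≥1} (3√3 π n χ₃(n) / (18a²)) e^{-π²n²t/(18a²)}`. -/
theorem theta_series_functional_equation (a t : ℝ) (ha : 0 < a) (ht : 0 < t) :
    ∑' n : ℕ, 6 * a * (n + 1) * chiThree (n + 1)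
        * Real.exp (-2 * (n + 1) ^ 2 * a ^ 2 / t) / Real.sqrt (2 * π * t ^ 3)
      = ∑' n : ℕ, (3 * Real.sqrt 3 * π * (n + 1) * chiThree (n + 1) / (18 * a ^ 2))
          * Real.exp (-π ^ 2 * (n + 1) ^ 2 * t / (18 * a ^ 2)) := by
  have hπ : (0 : ℝ) < π := Real.pi_pos
  set x : ℝ := 18 * a ^ 2 / (π * t) with hxdef
  have hx : 0 < x := by positivity
  have h1x : 1 / x = π * t / (18 * a ^ 2) := by rw [hxdef, one_div_div]
  -- LHS
  have hA := hasSum_oddKernel_third hx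
  have HL : HasSum (fun n : ℕ ↦ 6 * a * ((n : ℝ) + 1) * chiThree (n + 1)
      * Real.exp (-2 * ((n : ℝ) + 1) ^ 2 * a ^ 2 / t) / Real.sqrt (2 * π * t ^ 3))
      (18 * a / Real.sqrt (2 * π * t ^ 3)
        * HurwitzZeta.oddKernel ((1 / 3 : ℝ) : UnitAddCircle) x) := by
    refine (hA.mul_left (18 * a / Real.sqrt (2 * π * t ^ 3))).congr_fun fun n ↦ ?_
    rw [show -2 * ((n : ℝ) + 1) ^ 2 * a ^ 2 / t = -π * ((n : ℝ) + 1) ^ 2 * (x / 9) by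
      rw [hxdef]; field_simp; ring]
    ring
  -- RHS
  have hB := hasSum_sinKernel_third (t := 1 / x) (by positivity)
  have HR : HasSum (fun n : ℕ ↦ 3 * Real.sqrt 3 * π * ((n : ℝ) + 1) * chiThree (n + 1)
      / (18 * a ^ 2) * Real.exp (-π ^ 2 * ((n : ℝ) + 1) ^ 2 * t / (18 * a ^ 2)))
      (3 * π / (18 * a ^ 2)
        * HurwitzZeta.sinKernel ((1 / 3 : ℝ) : UnitAddCircle) (1 / x)) := by
    refine (hB.mul_left (3 * π / (18 * a ^ 2))).congr_fun fun n ↦ ?_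
    rw [show -π ^ 2 * ((n : ℝ) + 1) ^ 2 * t / (18 * a ^ 2)
        = -π * ((n : ℝ) + 1) ^ 2 * (1 / x) by rw [h1x]; field_simp]
    ring
  rw [HL.tsum_eq, HR.tsum_eq, HurwitzZeta.oddKernel_functional_equation]
  -- scalar identity
  have h32 : x ^ ((3 : ℝ) / 2) = Real.sqrt (x ^ 3) := by
    rw [Real.sqrt_eq_rpow, ← Real.rpow_natCast x 3, ← Real.rpow_mul hx.le]
    norm_num
  have hs : Real.sqrt (2 * π * t ^ 3) * Real.sqrt (x ^ 3) = 108 * a ^ 3 / π := by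
    rw [← Real.sqrt_mul (by positivity),
      show 2 * π * t ^ 3 * x ^ 3 = (108 * a ^ 3 / π) ^ 2 by rw [hxdef]; field_simp; ring,
      Real.sqrt_sq (by positivity)]
  have hkey : 18 * a / Real.sqrt (2 * π * t ^ 3) * (1 / x ^ ((3 : ℝ) / 2))
      = 3 * π / (18 * a ^ 2) := by
    have hsp : (0 : ℝ) < Real.sqrt (2 * π * t ^ 3) := Real.sqrt_pos.mpr (by positivity)
    have hxp : (0 : ℝ) < Real.sqrt (x ^ 3) := Real.sqrt_pos.mpr (by positivity)
    rw [h32, show 18 * a / Real.sqrt (2 * π * t ^ 3) * (1 / Real.sqrt (x ^ 3))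
        = 18 * a / (Real.sqrt (2 * π * t ^ 3) * Real.sqrt (x ^ 3)) by ring, hs]
    field_simp
    ring
  rw [← mul_assoc, hkey]
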